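/- For a Hermitian matrix-valued measurable function S : T² → Matrix (Fin p) (Fin p) ℂ with continuous dependence, the spectrum of the multiplication operator by S on L²(T², ℂ^p) equals the union over k = 1,…,p of the intervals [inf λₖ, sup λₖ], where λ₁(x) ≥ ⋯ ≥ λ_p(x) are the eigenvalues of S(x) in non-increasing order. -/

import Mathlib

open Matrix MeasureTheory Real

noncomputable section

instance : Fact (0 < 2 * π) := ⟨by positivity⟩

/-- The two-dimensional torus. -/
abbrev Torus2 : Type := AddCircle (2 * π) × AddCircle (2 * π)

/-!
By Weyl's inequality `|λₖ(A) - λₖ(B)| ≤ ‖A - B‖` (a Courant–Fischer dimension count), the sorted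
eigenvalues `λₖ(x)` of `S(x)` depend continuously on `x`; as the torus is compact and connected,
the range of `λₖ` is the interval `[inf λₖ, sup λₖ]`. It remains to see that the spectrum of `M` is
the union of the pointwise spectra of `S(x)`. Off that union the pointwise resolvent
`(c - S(x))⁻¹` is continuous, hence bounded, and multiplication by it inverts `c - M`. Conversely,
an eigenvector `v` of `S(x₀)`, cut off to a small neighbourhood of `x₀`, is an approximate
eigenvector of `M`.
-/

open Set
open scoped ENNReal InnerProductSpace

section ApproximateEigenvectors

variable {𝕜 E : Type*} [NontriviallyNormedField 𝕜] [NormedAddCommGroup E] [NormedSpace 𝕜 E]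

theorem mem_spectrum_of_approximate_eigenvectors {A : E →L[𝕜] E} {c : 𝕜}
    (h : ∀ ε > 0, ∃ g : E, 0 < ‖g‖ ∧ ‖(algebraMap 𝕜 (E →L[𝕜] E) c - A) g‖ ≤ ε * ‖g‖) :
    c ∈ spectrum 𝕜 A := by
  rw [spectrum.mem_iff]
  rintro ⟨u, hu⟩
  set R : E →L[𝕜] E := ↑u⁻¹
  obtain ⟨g, hg, hle⟩ := h (‖R‖ + 1)⁻¹ (by positivity)
  have hlt : ‖R‖ * (‖R‖ + 1)⁻¹ < 1 := by
    rw [mul_inv_lt_iff₀ (by positivity)]; linarith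
  have : ‖g‖ ≤ ‖R‖ * (‖R‖ + 1)⁻¹ * ‖g‖ := calc
    ‖g‖ = ‖R ((u : E →L[𝕜] E) g)‖ := by rw [← mul_apply_eq_comp, Units.inv_mul, one_apply_eq_self]
    _ ≤ ‖R‖ * ‖(u : E →L[𝕜] E) g‖ := R.le_opNorm _
    _ ≤ ‖R‖ * ((‖R‖ + 1)⁻¹ * ‖g‖) := by rw [hu]; gcongr
    _ = _ := by ring
  nlinarith

end ApproximateEigenvectors

section MultiplicationOperator

variable {X 𝕜 E : Type*} [MeasurableSpace X] [NontriviallyNormedField 𝕜] [NormedAddCommGroup E]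
  [NormedSpace 𝕜 E] {q : ℝ≥0∞} [Fact (1 ≤ q)] {μ : Measure X}

def IsMultiplicationOperator (μ : Measure X) (F : X → E →L[𝕜] E)
    (M : Lp E q μ →L[𝕜] Lp E q μ) : Prop :=
  ∀ g : Lp E q μ, M g =ᵐ[μ] fun x => F x (g x)

variable {F G : X → E →L[𝕜] E} {M N : Lp E q μ →L[𝕜] Lp E q μ}

theorem isMultiplicationOperator_algebraMap (c : 𝕜) :
    IsMultiplicationOperator μ (fun _ => algebraMap 𝕜 (E →L[𝕜] E) c)
      (algebraMap 𝕜 (Lp E q μ →L[𝕜] Lp E q μ) c) := fun g => by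
  filter_upwards [Lp.coeFn_smul c g] with x hx
  simp [Algebra.algebraMap_eq_smul_one, hx]

theorem isMultiplicationOperator_one :
    IsMultiplicationOperator μ (fun _ => (1 : E →L[𝕜] E)) (1 : Lp E q μ →L[𝕜] Lp E q μ) :=
  fun _ => .of_forall fun _ => rfl

namespace IsMultiplicationOperator

theorem unique (hM : IsMultiplicationOperator μ F M) (hN : IsMultiplicationOperator μ F N) :
    M = N :=
  ContinuousLinearMap.ext fun g => Lp.ext ((hM g).trans (hN g).symm)

theorem sub (hM : IsMultiplicationOperator μ F M) (hN : IsMultiplicationOperator μ G N) :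
    IsMultiplicationOperator μ (F - G) (M - N) := fun g => by
  filter_upwards [Lp.coeFn_sub (M g) (N g), hM g, hN g] with x hx hMx hNx
  rw [_root_.sub_apply, hx, Pi.sub_apply, hMx, hNx]
  rfl

theorem mul (hM : IsMultiplicationOperator μ F M) (hN : IsMultiplicationOperator μ G N) :
    IsMultiplicationOperator μ (F * G) (M * N) := fun g => by
  filter_upwards [hM (N g), hN g] with x hMx hNx
  simp [hMx, hNx]

end IsMultiplicationOperator

variable [TopologicalSpace X] [OpensMeasurableSpace X]

theorem exists_isMultiplicationOperator [CompactSpace X]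
    [SecondCountableTopologyEither X (E →L[𝕜] E)] (hF : Continuous F) :
    ∃ M : Lp E q μ →L[𝕜] Lp E q μ, IsMultiplicationOperator μ F M := by
  obtain ⟨C, hC⟩ := (isCompact_range hF.norm).bddAbove
  have hFmem : MemLp F ∞ μ :=
    memLp_top_of_bound hF.aestronglyMeasurable C (.of_forall fun x => hC ⟨x, rfl⟩)
  -- the Hölder pairing `L^∞ × L^q → L^q` induced by evaluation `(E →L[𝕜] E) × E → E`
  let B := ContinuousLinearMap.id 𝕜 (E →L[𝕜] E)
  refine ⟨B.holderL μ ∞ q q hFmem.toLp, fun g => ?_⟩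
  filter_upwards [B.coeFn_holder (r := q) hFmem.toLp g, hFmem.coeFn_toLp] with x hx hFx
  simp [B, hx, hFx]

namespace IsMultiplicationOperator

theorem spectrum_subset [CompactSpace X] [SecondCountableTopologyEither X (E →L[𝕜] E)]
    [CompleteSpace E] (hF : Continuous F) (hM : IsMultiplicationOperator μ F M) :
    spectrum 𝕜 M ⊆ ⋃ x, spectrum 𝕜 (F x) := by
  intro c hc
  by_contra hcF
  simp only [mem_iUnion, not_exists, spectrum.mem_iff, not_not] at hcF
  set R : X → E →L[𝕜] E := fun x => Ring.inverse (algebraMap 𝕜 _ c - F x)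
  have hR : Continuous R := continuous_iff_continuousAt.2 fun x =>
    (NormedRing.inverse_continuousAt (hcF x).unit).comp_of_eq
      (continuous_const.sub hF).continuousAt (hcF x).unit_spec.symm
  obtain ⟨N, hN⟩ := exists_isMultiplicationOperator (μ := μ) (q := q) hR
  have hcM := sub (isMultiplicationOperator_algebraMap c) hM
  have hright : ((fun _ => algebraMap 𝕜 _ c) - F) * R = fun _ => 1 :=
    funext fun x => Ring.mul_inverse_cancel _ (hcF x)
  have hleft : R * ((fun _ => algebraMap 𝕜 _ c) - F) = fun _ => 1 :=
    funext fun x => Ring.inverse_mul_cancel _ (hcF x)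
  exact hc ⟨⟨_, N, (hright ▸ hcM.mul hN).unique isMultiplicationOperator_one,
    (hleft ▸ hN.mul hcM).unique isMultiplicationOperator_one⟩, rfl⟩

theorem mem_spectrum_of_apply_eq_smul [Measure.IsOpenPosMeasure μ] [IsFiniteMeasure μ]
    (hF : Continuous F) (hM : IsMultiplicationOperator μ F M) {x₀ : X} {v : E} (hv : v ≠ 0)
    {c : 𝕜} (hFv : F x₀ v = c • v) : c ∈ spectrum 𝕜 M := by
  refine mem_spectrum_of_approximate_eigenvectors fun ε hε => ?_
  set U := {x | ‖F x v - c • v‖ < ε * ‖v‖}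
  have hU : IsOpen U := isOpen_lt (by fun_prop) continuous_const
  have hx₀ : x₀ ∈ U := by simp [U, hFv, hε, hv]
  have hUpos : μ U ≠ 0 := (hU.measure_pos μ ⟨x₀, hx₀⟩).ne'
  set g := indicatorConstLp q hU.measurableSet (measure_ne_top μ U) v
  refine ⟨g, ?_, Lp.norm_le_mul_norm_of_ae_le_mul ?_⟩
  · rw [norm_indicatorConstLp' (one_pos.trans_le Fact.out).ne' hUpos]
    exact mul_pos (norm_pos_iff.2 hv)
      (Real.rpow_pos_of_pos (ENNReal.toReal_pos hUpos (measure_ne_top μ U)) _)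
  · have hg : ⇑g =ᵐ[μ] U.indicator fun _ => v := indicatorConstLp_coeFn
    filter_upwards [sub (isMultiplicationOperator_algebraMap c) hM g, hg] with x hx hgx
    rw [hx, hgx]
    by_cases hxU : x ∈ U
    · have hxU' : ‖F x v - c • v‖ < ε * ‖v‖ := hxU
      simpa [indicator_of_mem hxU, norm_sub_rev] using hxU'.le
    · simp [indicator_of_notMem hxU]

theorem spectrum_eq_iUnion [CompactSpace X] [SecondCountableTopologyEither X (E →L[𝕜] E)]
    [CompleteSpace E] [FiniteDimensional 𝕜 E] [Measure.IsOpenPosMeasure μ] [IsFiniteMeasure μ]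
    (hF : Continuous F) (hM : IsMultiplicationOperator μ F M) :
    spectrum 𝕜 M = ⋃ x, spectrum 𝕜 (F x) := by
  refine (hM.spectrum_subset hF).antisymm (iUnion_subset fun x c hc => ?_)
  rw [ContinuousLinearMap.spectrum_eq, ← Module.End.hasEigenvalue_iff_mem_spectrum] at hc
  obtain ⟨v, hv⟩ := hc.exists_hasEigenvector
  exact hM.mem_spectrum_of_apply_eq_smul hF hv.2 hv.apply_eq_smul

end IsMultiplicationOperator

end MultiplicationOperator

theorem Submodule.exists_ne_zero_mem_inf_of_finrank_lt {K V : Type*} [DivisionRing K]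
    [AddCommGroup V] [Module K V] [FiniteDimensional K V] {W₁ W₂ : Submodule K V}
    (h : Module.finrank K V < Module.finrank K W₁ + Module.finrank K W₂) :
    ∃ v ∈ W₁ ⊓ W₂, v ≠ 0 := by
  rw [← Submodule.ne_bot_iff]
  intro hbot
  have hsum := Submodule.finrank_sup_add_finrank_inf_eq W₁ W₂
  rw [hbot, finrank_bot] at hsum
  have := Submodule.finrank_le (W₁ ⊔ W₂)
  omega

theorem LinearIndependent.finrank_span_image_finset {K V ι : Type*} [DivisionRing K]
    [AddCommGroup V] [Module K V] {b : ι → V} (hb : LinearIndependent K b) (s : Finset ι) :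
    Module.finrank K (Submodule.span K (b '' s)) = s.card := by
  rw [Set.image_eq_range]
  exact (finrank_span_eq_card (hb.comp _ Subtype.val_injective)).trans (Fintype.card_coe s)

section Weyl

variable {𝕜 E ι : Type*} [RCLike 𝕜] [NormedAddCommGroup E] [InnerProductSpace 𝕜 E]

theorem Orthonormal.le_re_inner_apply_of_mem_span {b : ι → E} (hb : Orthonormal 𝕜 b)
    {T : E →L[𝕜] E} {ev : ι → ℝ} (hT : ∀ i, T (b i) = (ev i : 𝕜) • b i) {s : Finset ι}
    {t : ℝ} (hs : ∀ i ∈ s, t ≤ ev i) {v : E} (hv : v ∈ Submodule.span 𝕜 (b '' s)) :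
    t * ‖v‖ ^ 2 ≤ RCLike.re ⟪v, T v⟫_𝕜 := by
  obtain ⟨c, rfl⟩ := (Submodule.mem_span_image_finset_iff_exists_fun' 𝕜).1 hv
  have hTv : T (∑ i ∈ s, c i • b i) = ∑ i ∈ s, ((ev i : 𝕜) * c i) • b i := by
    simp [map_sum, hT, smul_smul, mul_comm]
  rw [hTv, @norm_sq_eq_re_inner 𝕜, hb.inner_sum, hb.inner_sum, map_sum, map_sum, Finset.mul_sum]
  refine Finset.sum_le_sum fun i hi => ?_
  rw [mul_left_comm, RCLike.conj_mul, ← RCLike.ofReal_pow, ← RCLike.ofReal_mul,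
    RCLike.ofReal_re, RCLike.ofReal_re]
  exact mul_le_mul_of_nonneg_right (hs i hi) (by positivity)

theorem Orthonormal.re_inner_apply_le_of_mem_span {b : ι → E} (hb : Orthonormal 𝕜 b)
    {T : E →L[𝕜] E} {ev : ι → ℝ} (hT : ∀ i, T (b i) = (ev i : 𝕜) • b i) {s : Finset ι}
    {t : ℝ} (hs : ∀ i ∈ s, ev i ≤ t) {v : E} (hv : v ∈ Submodule.span 𝕜 (b '' s)) :
    RCLike.re ⟪v, T v⟫_𝕜 ≤ t * ‖v‖ ^ 2 := by
  have := hb.le_re_inner_apply_of_mem_span (T := -T) (ev := -ev) (t := -t)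
    (fun i => by simp [hT]) (fun i hi => neg_le_neg (hs i hi)) hv
  simp only [_root_.neg_apply, inner_neg_right, map_neg] at this
  linarith

theorem eigenvalue_le_add_norm_sub_of_antitone {n : ℕ} {T T' : E →L[𝕜] E}
    {b b' : OrthonormalBasis (Fin n) 𝕜 E} {ev ev' : Fin n → ℝ} (hev : Antitone ev)
    (hev' : Antitone ev') (hT : ∀ i, T (b i) = (ev i : 𝕜) • b i)
    (hT' : ∀ i, T' (b' i) = (ev' i : 𝕜) • b' i) (k : Fin n) :
    ev k ≤ ev' k + ‖T - T'‖ := by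
  have : FiniteDimensional 𝕜 E := b.toBasis.finiteDimensional_of_finite
  obtain ⟨v, ⟨hvb, hvb'⟩, hv⟩ := Submodule.exists_ne_zero_mem_inf_of_finrank_lt
    (W₁ := Submodule.span 𝕜 (b '' (Finset.Iic k))) (W₂ := Submodule.span 𝕜 (b' '' (Finset.Ici k)))
    (by rw [b.orthonormal.linearIndependent.finrank_span_image_finset,
      b'.orthonormal.linearIndependent.finrank_span_image_finset, Fin.card_Iic, Fin.card_Ici,
      Module.finrank_eq_card_basis b.toBasis, Fintype.card_fin]; omega)
  have hlow := b.orthonormal.le_re_inner_apply_of_mem_span hT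
    (fun i hi => hev (Finset.mem_Iic.1 hi)) hvb
  have hup := b'.orthonormal.re_inner_apply_le_of_mem_span hT'
    (fun i hi => hev' (Finset.mem_Ici.1 hi)) hvb'
  have hdiff : RCLike.re ⟪v, (T - T') v⟫_𝕜 ≤ ‖T - T'‖ * ‖v‖ ^ 2 := calc
    _ ≤ ‖⟪v, (T - T') v⟫_𝕜‖ := RCLike.re_le_norm _
    _ ≤ ‖v‖ * ‖(T - T') v‖ := norm_inner_le_norm _ _
    _ ≤ ‖v‖ * (‖T - T'‖ * ‖v‖) := by gcongr; exact (T - T').le_opNorm v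
    _ = ‖T - T'‖ * ‖v‖ ^ 2 := by ring
  rw [_root_.sub_apply, inner_sub_right, map_sub] at hdiff
  have hv2 : 0 < ‖v‖ ^ 2 := by positivity
  nlinarith

theorem abs_eigenvalue_sub_le_norm_sub_of_antitone {n : ℕ} {T T' : E →L[𝕜] E}
    {b b' : OrthonormalBasis (Fin n) 𝕜 E} {ev ev' : Fin n → ℝ} (hev : Antitone ev)
    (hev' : Antitone ev') (hT : ∀ i, T (b i) = (ev i : 𝕜) • b i)
    (hT' : ∀ i, T' (b' i) = (ev' i : 𝕜) • b' i) (k : Fin n) :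
    |ev k - ev' k| ≤ ‖T - T'‖ := by
  have h := eigenvalue_le_add_norm_sub_of_antitone hev hev' hT hT' k
  have h' := eigenvalue_le_add_norm_sub_of_antitone hev' hev hT' hT k
  rw [norm_sub_rev] at h'
  exact abs_sub_le_iff.2 ⟨by linarith, by linarith⟩

theorem continuous_eigenvalue_of_antitone {X : Type*} [TopologicalSpace X] {n : ℕ}
    {T : X → E →L[𝕜] E} (hT : Continuous T) {ev : X → Fin n → ℝ} (hev : ∀ x, Antitone (ev x))
    (hb : ∀ x, ∃ b : OrthonormalBasis (Fin n) 𝕜 E, ∀ i, T x (b i) = (ev x i : 𝕜) • b i)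
    (k : Fin n) : Continuous fun x => ev x k := by
  choose b hb using hb
  refine continuous_iff_continuousAt.2 fun x => ?_
  rw [ContinuousAt, tendsto_iff_dist_tendsto_zero]
  refine squeeze_zero (fun _ => dist_nonneg) (fun y => ?_)
    (tendsto_iff_dist_tendsto_zero.1 (hT.tendsto x))
  rw [Real.dist_eq, dist_eq_norm]
  exact abs_eigenvalue_sub_le_norm_sub_of_antitone (hev y) (hev x) (hb y) (hb x) k

end Weyl

theorem Continuous.range_eq_Icc_iInf_iSup {X α : Type*} [TopologicalSpace X] [CompactSpace X]
    [ConnectedSpace X] [ConditionallyCompleteLinearOrder α] [TopologicalSpace α] [OrderTopology α]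
    {f : X → α} (hf : Continuous f) : range f = Icc (⨅ x, f x) (⨆ x, f x) := by
  have hc := isCompact_range hf
  have hconn := isConnected_range hf
  refine Subset.antisymm ?_ (hconn.Icc_subset (hc.sInf_mem hconn.nonempty)
    (hc.sSup_mem hconn.nonempty))
  rintro _ ⟨x, rfl⟩
  exact ⟨ciInf_le hc.bddBelow x, le_ciSup hc.bddAbove x⟩

theorem Matrix.IsHermitian.toEuclideanCLM_eigenvectorBasis {𝕜 n : Type*} [RCLike 𝕜] [Fintype n]
    [DecidableEq n] {A : Matrix n n 𝕜} (hA : A.IsHermitian) (i : n) :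
    toEuclideanCLM (n := n) (𝕜 := 𝕜) A (hA.eigenvectorBasis i) =
      (hA.eigenvalues i : 𝕜) • hA.eigenvectorBasis i :=
  WithLp.ofLp_injective 2 (by simpa using hA.mulVec_eigenvectorBasis i)

theorem spectrum_multiplication_operator_general {p : ℕ}
    (S : Torus2 → Matrix (Fin p) (Fin p) ℂ)
    (hScont : Continuous S)
    (hSHerm : ∀ x, (S x).IsHermitian)
    (μ : Torus2 → Fin p → ℝ)
    (hμanti : ∀ x, Antitone (μ x))
    (hμeig : ∀ x, ∃ σ : Equiv.Perm (Fin p), μ x = (hSHerm x).eigenvalues ∘ σ)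
    (M : Lp (E := EuclideanSpace ℂ (Fin p)) 2 (volume : Measure Torus2) →L[ℂ]
         Lp (E := EuclideanSpace ℂ (Fin p)) 2 (volume : Measure Torus2))
    (hM : ∀ g, ∀ᵐ x : Torus2, ∀ i : Fin p,
      (M g : Torus2 → EuclideanSpace ℂ (Fin p)) x i =
        ∑ j, S x i j * (g : Torus2 → EuclideanSpace ℂ (Fin p)) x j) :
    spectrum ℂ M =
      Complex.ofReal '' ⋃ k : Fin p, Set.Icc (⨅ x, μ x k) (⨆ x, μ x k) := by
  let T : Torus2 → EuclideanSpace ℂ (Fin p) →L[ℂ] EuclideanSpace ℂ (Fin p) :=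
    fun x => toEuclideanCLM (n := Fin p) (𝕜 := ℂ) (S x)
  have hT : Continuous T := (LinearMap.continuous_of_finiteDimensional
    (toEuclideanCLM (n := Fin p) (𝕜 := ℂ)).toAlgEquiv.toLinearMap).comp hScont
  have hMT : IsMultiplicationOperator volume T M := fun g => by
    filter_upwards [hM g] with x hx
    ext i
    simpa [T, mulVec, dotProduct] using hx i
  have heig : ∀ x, ∃ b : OrthonormalBasis (Fin p) ℂ (EuclideanSpace ℂ (Fin p)),
      ∀ i, T x (b i) = (μ x i : ℂ) • b i := fun x => by
    obtain ⟨σ, hσ⟩ := hμeig x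
    exact ⟨(hSHerm x).eigenvectorBasis.reindex σ.symm, fun i => by
      simpa [hσ] using (hSHerm x).toEuclideanCLM_eigenvectorBasis (σ i)⟩
  have hspec : ∀ x, spectrum ℂ (T x) = Complex.ofReal '' range (μ x) := fun x => by
    obtain ⟨σ, hσ⟩ := hμeig x
    rw [AlgEquiv.spectrum_eq, (hSHerm x).spectrum_eq_image_range, hσ, σ.surjective.range_comp]
    rfl
  have hcont := continuous_eigenvalue_of_antitone hT hμanti heig
  rw [hMT.spectrum_eq_iUnion hT]
  simp_rw [hspec, ← image_iUnion, ← fun k => (hcont k).range_eq_Icc_iInf_iSup]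
  congr 1
  ext
  simp only [mem_iUnion, mem_range]
  exact exists_comm

/-- Spectrum of the multiplication operator by a continuous Hermitian matrix-valued
symbol `S` on `L²(T², ℂᵖ)`: it equals the union over `k` of the closed intervals
`[inf λₖ, sup λₖ]`, where `λ₁(x) ≥ ⋯ ≥ λ_p(x)` are the eigenvalues of `S(x)`. -/
theorem spectrum_multiplication_operator {p : ℕ} (hp : 0 < p)
    (S : Torus2 → Matrix (Fin p) (Fin p) ℂ)
    (hScont : Continuous S)
    (hSHerm : ∀ x, (S x).IsHermitian)
    (μ : Torus2 → Fin p → ℝ)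
    (hμanti : ∀ x, Antitone (μ x))
    (hμeig : ∀ x, ∃ σ : Equiv.Perm (Fin p), μ x = (hSHerm x).eigenvalues ∘ σ)
    (M : Lp (E := EuclideanSpace ℂ (Fin p)) 2 (volume : Measure Torus2) →L[ℂ]
         Lp (E := EuclideanSpace ℂ (Fin p)) 2 (volume : Measure Torus2))
    (hM : ∀ g, ∀ᵐ x : Torus2, ∀ i : Fin p,
      (M g : Torus2 → EuclideanSpace ℂ (Fin p)) x i =
        ∑ j, S x i j * (g : Torus2 → EuclideanSpace ℂ (Fin p)) x j) :
    spectrum ℂ M =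
      Complex.ofReal '' ⋃ k : Fin p, Set.Icc (⨅ x, μ x k) (⨆ x, μ x k) :=
  spectrum_multiplication_operator_general S hScont hSHerm μ hμanti hμeig M hM

end
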